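/- Let D = {z ∈ ℂ : |z| ≤ 1} be the closed unit disc and let S be the linear span in C(D) of the four functions 1, z ↦ z, z ↦ z̄, and z ↦ |z|². Then the Choquet boundary of S equals all of D. -/

import Mathlib

/-- The evaluation functional at a point, as an element of the dual of a subspace of `C(X, ℂ)`. -/
noncomputable def evalDual {X : Type*} [TopologicalSpace X] [CompactSpace X]
    (S : Submodule ℂ C(X, ℂ)) (x : X) : StrongDual ℂ ↥S :=
  LinearMap.mkContinuous
    { toFun := fun f => (f : C(X, ℂ)) x
      map_add' := fun f g => rfl
      map_smul' := fun c f => rfl }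
    1
    (fun f => by
      rw [one_mul]; exact ContinuousMap.norm_coe_le_norm (f : C(X, ℂ)) x)

/-- The Choquet boundary of a subspace `S` of `C(X, ℂ)`: the set of points `x ∈ X` such that
the evaluation functional at `x` is an extreme point of the closed unit ball of the dual of `S`. -/
noncomputable def ChoquetBoundary {X : Type*} [TopologicalSpace X] [CompactSpace X]
    (S : Submodule ℂ C(X, ℂ)) : Set X :=
  {x | evalDual S x ∈ Set.extremePoints ℝ (Metric.closedBall (0 : StrongDual ℂ ↥S) 1)}

instance : CompactSpace ↥(Metric.closedBall (0 : ℂ) 1) :=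
  isCompact_iff_compactSpace.mp (isCompact_closedBall _ _)

/-! If `δ_x = a φ + b ψ` with `a, b > 0` and `‖φ‖, ‖ψ‖ ≤ 1`, then `φ 1 = ψ 1 = 1`, because `1` is an
extreme point of the closed unit disc of `ℂ`. By Hahn–Banach, `φ` and `ψ` extend to functionals of
norm `≤ 1` on all of `C(D)` fixing `1`, and such functionals are positive. The function
`|z - x|²` lies in `S`, is nonnegative and vanishes at `x`, so both extensions annihilate it; the
Cauchy–Schwarz inequality `|Φ w|² ≤ Φ (|w|²)` for `w = z - x` then forces `φ` to agree with
evaluation at `x` on the four generators. -/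

open Complex ComplexConjugate
open scoped ComplexOrder

lemma star_sub_algebraMap_mul_sub_algebraMap {A : Type*} [Ring A] [StarRing A] [Algebra ℂ A]
    [StarModule ℂ A] (g : A) (c : ℂ) :
    star (g - algebraMap ℂ A c) * (g - algebraMap ℂ A c) =
      star g * g - (conj c • g + c • star g) + algebraMap ℂ A (normSq c) := by
  simp only [star_sub, Algebra.algebraMap_eq_smul_one, star_smul, star_one, mul_sub, sub_mul,
    smul_mul_assoc, mul_smul_comm, one_mul, mul_one, normSq_eq_conj_mul_self, star_def]
  module

namespace Complex

lemma eq_one_of_one_mem_openSegment {u v : ℂ} (hu : ‖u‖ ≤ 1) (hv : ‖v‖ ≤ 1)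
    (h : (1 : ℂ) ∈ openSegment ℝ u v) : u = 1 := by
  have hext : (1 : ℂ) ∈ Set.extremePoints ℝ (Metric.closedBall 0 1) :=
    StrictConvexSpace.sphere_subset_extremePoints_closedBall _ one_ne_zero
      (mem_sphere_zero_iff_norm.2 norm_one)
  exact (mem_extremePoints_iff_left.1 hext).2 u (by simpa using hu) v (by simpa using hv) h

lemma eq_zero_of_zero_mem_openSegment {u v : ℂ} (hu : 0 ≤ u) (hv : 0 ≤ v)
    (h : (0 : ℂ) ∈ openSegment ℝ u v) : u = 0 := by
  obtain ⟨a, b, ha, hb, -, hab⟩ := h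
  rw [nonneg_iff] at hu hv
  have hre : a * u.re + b * v.re = 0 := by simpa using congrArg re hab
  refine Complex.ext ?_ hu.2.symm
  rw [zero_re]
  nlinarith

end Complex

lemma ContinuousLinearMap.apply_mem_openSegment {E : Type*} [NormedAddCommGroup E]
    [NormedSpace ℂ E] {φ ψ χ : StrongDual ℂ E} (h : χ ∈ openSegment ℝ φ ψ) (v : E) :
    χ v ∈ openSegment ℝ (φ v) (ψ v) := by
  obtain ⟨a, b, ha, hb, hab, rfl⟩ := h
  exact ⟨a, b, ha, hb, hab, by simp⟩

/-- A state of `C(X, ℂ)`, defined by norm and unitality; positivity is `IsState.apply_nonneg`. -/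
structure IsState {X : Type*} [TopologicalSpace X] [CompactSpace X]
    (Φ : StrongDual ℂ C(X, ℂ)) : Prop where
  norm_le_one : ‖Φ‖ ≤ 1
  apply_one : Φ 1 = 1

namespace IsState

variable {X : Type*} [TopologicalSpace X] [CompactSpace X] {Φ : StrongDual ℂ C(X, ℂ)}

lemma apply_algebraMap (hΦ : IsState Φ) (a : ℂ) : Φ (algebraMap ℂ C(X, ℂ) a) = a := by
  rw [Algebra.algebraMap_eq_smul_one, map_smul, hΦ.apply_one, smul_eq_mul, mul_one]

lemma norm_apply_sub_le (hΦ : IsState Φ) (f : C(X, ℂ)) (a : ℂ) :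
    ‖Φ f - a‖ ≤ ‖f - algebraMap ℂ C(X, ℂ) a‖ := by
  have h := map_sub Φ f (algebraMap ℂ C(X, ℂ) a)
  rw [hΦ.apply_algebraMap] at h
  rw [← h]
  exact Φ.le_of_opNorm_le hΦ.norm_le_one _ |>.trans_eq (one_mul _)

/-- The disc of radius `√(‖f‖² + t²)` about `-t i` contains the range of the real-valued `f`,
hence contains `Φ f`; letting `t → ±∞` forces `Φ f` onto the real axis. -/
lemma im_apply_eq_zero (hΦ : IsState Φ) {f : C(X, ℂ)} (hf : ∀ x, (f x).im = 0) :
    (Φ f).im = 0 := by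
  have key (t : ℝ) : 2 * (Φ f).im * t ≤ ‖f‖ ^ 2 := by
    have hbound : ‖f - algebraMap ℂ C(X, ℂ) (-(t * I))‖ ≤ √(‖f‖ ^ 2 + t ^ 2) := by
      refine (ContinuousMap.norm_le _ (Real.sqrt_nonneg _)).2 fun x => Real.le_sqrt_of_sq_le ?_
      have hx : |(f x).re| ≤ ‖f‖ := (abs_re_le_norm _).trans (f.norm_coe_le_norm x)
      have hsq : ‖(f - algebraMap ℂ C(X, ℂ) (-(t * I))) x‖ ^ 2 = (f x).re ^ 2 + t ^ 2 := by
        rw [Complex.sq_norm, normSq_apply]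
        simp [hf x, sq]
      rw [hsq, ← sq_abs (f x).re]
      gcongr
    have h := pow_le_pow_left₀ (norm_nonneg _) ((hΦ.norm_apply_sub_le f _).trans hbound) 2
    rw [Real.sq_sqrt (by positivity), Complex.sq_norm, normSq_apply] at h
    simp only [sub_neg_eq_add, add_re, mul_re, ofReal_re, I_re, mul_zero, ofReal_im, I_im,
      mul_one, sub_self, add_zero, add_im, mul_im] at h
    nlinarith [sq_nonneg (Φ f).re]
  by_contra hne
  have h := key ((‖f‖ ^ 2 + 1) / (2 * (Φ f).im))
  rw [mul_div_cancel₀ _ (by positivity)] at h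
  linarith

lemma apply_nonneg (hΦ : IsState Φ) {f : C(X, ℂ)} (hf : ∀ x, 0 ≤ f x) : 0 ≤ Φ f := by
  have hf' (x : X) : 0 ≤ (f x).re ∧ (f x).im = 0 :=
    ⟨(nonneg_iff.1 (hf x)).1, (nonneg_iff.1 (hf x)).2.symm⟩
  have hbound : ‖f - algebraMap ℂ C(X, ℂ) ‖f‖‖ ≤ ‖f‖ := by
    refine (ContinuousMap.norm_le _ (norm_nonneg f)).2 fun x => ?_
    have hle : (f x).re ≤ ‖f‖ := (re_le_norm _).trans (f.norm_coe_le_norm x)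
    have hx : (f - algebraMap ℂ C(X, ℂ) ‖f‖) x = (((f x).re - ‖f‖ : ℝ) : ℂ) :=
      Complex.ext (by simp) (by simp [(hf' x).2])
    rw [hx, norm_real, Real.norm_eq_abs, abs_le]
    constructor <;> linarith [(hf' x).1]
  have h := (hΦ.norm_apply_sub_le f _).trans hbound
  have hre : ‖f‖ - (Φ f).re ≤ ‖Φ f - ‖f‖‖ := by
    simpa [norm_sub_rev] using re_le_norm ((‖f‖ : ℂ) - Φ f)
  exact nonneg_iff.2 ⟨by linarith, (hΦ.im_apply_eq_zero fun x => (hf' x).2).symm⟩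

lemma apply_star (hΦ : IsState Φ) (f : C(X, ℂ)) : Φ (star f) = conj (Φ f) := by
  have hsum := hΦ.im_apply_eq_zero (f := f + star f) fun x => by simp
  have hdiff := hΦ.im_apply_eq_zero (f := I • (f - star f)) fun x => by simp
  simp only [map_add, map_smul, map_sub, add_im, smul_eq_mul, mul_im, I_re, I_im, sub_re]
    at hsum hdiff
  apply Complex.ext <;> simp <;> linarith

lemma normSq_apply_le (hΦ : IsState Φ) (w : C(X, ℂ)) :
    (normSq (Φ w) : ℂ) ≤ Φ (star w * w) := by
  set A := Φ w
  have h := hΦ.apply_nonneg (f := star (w - algebraMap ℂ C(X, ℂ) A) * (w - algebraMap ℂ C(X, ℂ) A))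
    fun x => star_mul_self_nonneg ((w - algebraMap ℂ C(X, ℂ) A) x)
  rw [star_sub_algebraMap_mul_sub_algebraMap, map_add, map_sub, map_add, map_smul, map_smul,
    hΦ.apply_star, hΦ.apply_algebraMap, smul_eq_mul, smul_eq_mul] at h
  rw [← sub_nonneg]
  convert h using 1
  rw [normSq_eq_conj_mul_self]
  ring

lemma apply_eq_of_apply_star_sub_mul_sub_eq_zero (hΦ : IsState Φ) {g : C(X, ℂ)} {c : ℂ}
    (h : Φ (star (g - algebraMap ℂ C(X, ℂ) c) * (g - algebraMap ℂ C(X, ℂ) c)) = 0) :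
    Φ g = c ∧ Φ (star g) = conj c ∧ Φ (star g * g) = normSq c := by
  have hg : Φ g = c := by
    have hcs := hΦ.normSq_apply_le (g - algebraMap ℂ C(X, ℂ) c)
    rw [h, ← ofReal_zero, real_le_real, map_sub, hΦ.apply_algebraMap] at hcs
    exact sub_eq_zero.1 (normSq_eq_zero.1 (hcs.antisymm (normSq_nonneg _)))
  have hstar : Φ (star g) = conj c := by rw [hΦ.apply_star, hg]
  refine ⟨hg, hstar, ?_⟩
  rw [star_sub_algebraMap_mul_sub_algebraMap, map_add, map_sub, map_add, map_smul, map_smul, hg,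
    hstar, hΦ.apply_algebraMap, smul_eq_mul, smul_eq_mul, normSq_eq_conj_mul_self] at h
  rw [normSq_eq_conj_mul_self]
  linear_combination h

end IsState

section Subspace

variable {X : Type*} [TopologicalSpace X] [CompactSpace X]

@[simp] lemma evalDual_apply (S : Submodule ℂ C(X, ℂ)) (x : X) (f : S) :
    evalDual S x f = (f : C(X, ℂ)) x := rfl

lemma exists_isState_extension {S : Submodule ℂ C(X, ℂ)} (h1 : 1 ∈ S) {φ : StrongDual ℂ S}
    (hφ : ‖φ‖ ≤ 1) (hφ1 : φ ⟨1, h1⟩ = 1) :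
    ∃ Φ : StrongDual ℂ C(X, ℂ), IsState Φ ∧ ∀ f : S, Φ f = φ f := by
  obtain ⟨Φ, hΦφ, hnorm⟩ := exists_extension_norm_eq S φ
  exact ⟨Φ, ⟨hnorm.trans_le hφ, hΦφ ⟨1, h1⟩ ▸ hφ1⟩, hΦφ⟩

lemma apply_one_eq_one_of_evalDual_mem_openSegment {S : Submodule ℂ C(X, ℂ)} (h1 : 1 ∈ S)
    {x : X} {φ ψ : StrongDual ℂ S} (hφ : ‖φ‖ ≤ 1) (hψ : ‖ψ‖ ≤ 1)
    (hseg : evalDual S x ∈ openSegment ℝ φ ψ) : φ ⟨1, h1⟩ = 1 := by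
  have hone : ‖(⟨1, h1⟩ : S)‖ ≤ 1 := show ‖(1 : C(X, ℂ))‖ ≤ 1 from
    (ContinuousMap.norm_le _ zero_le_one).2 fun _ => by rw [ContinuousMap.one_apply, norm_one]
  have hle (χ : StrongDual ℂ S) (hχ : ‖χ‖ ≤ 1) : ‖χ ⟨1, h1⟩‖ ≤ 1 :=
    (χ.le_of_opNorm_le hχ _).trans (mul_le_one₀ le_rfl (norm_nonneg _) hone)
  have h := ContinuousLinearMap.apply_mem_openSegment hseg ⟨1, h1⟩
  rw [evalDual_apply, ContinuousMap.one_apply] at h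
  exact Complex.eq_one_of_one_mem_openSegment (hle φ hφ) (hle ψ hψ) h

lemma IsState.apply_eq_zero_of_evalDual_mem_openSegment {S : Submodule ℂ C(X, ℂ)} {x : X}
    {φ ψ : StrongDual ℂ S} {Φ Ψ : StrongDual ℂ C(X, ℂ)} (hΦ : IsState Φ) (hΨ : IsState Ψ)
    (hΦφ : ∀ f : S, Φ f = φ f) (hΨψ : ∀ f : S, Ψ f = ψ f)
    (hseg : evalDual S x ∈ openSegment ℝ φ ψ) {q : C(X, ℂ)} (hqS : q ∈ S)
    (hq : ∀ z, 0 ≤ q z) (hqx : q x = 0) : Φ q = 0 := by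
  have h := ContinuousLinearMap.apply_mem_openSegment hseg ⟨q, hqS⟩
  rw [← hΦφ, ← hΨψ, evalDual_apply, hqx] at h
  exact Complex.eq_zero_of_zero_mem_openSegment (hΦ.apply_nonneg hq) (hΨ.apply_nonneg hq) h

lemma eq_evalDual_of_apply_eq {s : Set C(X, ℂ)} {φ : StrongDual ℂ (Submodule.span ℂ s)} {x : X}
    (h : ∀ f (hf : f ∈ s), φ ⟨f, Submodule.subset_span hf⟩ = f x) :
    φ = evalDual (Submodule.span ℂ s) x :=
  ContinuousLinearMap.coe_injective <|
    LinearMap.ext_on Submodule.span_span_coe_preimage fun f hf => h f hf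

end Subspace

local notation "𝔻" => Metric.closedBall (0 : ℂ) 1

def discCoord : C(𝔻, ℂ) := ⟨fun z => (z : ℂ), continuous_subtype_val⟩

noncomputable abbrev discSpan : Submodule ℂ C(𝔻, ℂ) :=
  Submodule.span ℂ {1, discCoord, star discCoord, star discCoord * discCoord}

lemma star_sub_mul_sub_mem_discSpan (c : ℂ) :
    star (discCoord - algebraMap ℂ C(𝔻, ℂ) c) * (discCoord - algebraMap ℂ C(𝔻, ℂ) c) ∈
      discSpan := by
  rw [star_sub_algebraMap_mul_sub_algebraMap, Algebra.algebraMap_eq_smul_one]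
  refine add_mem (sub_mem ?_ (add_mem (Submodule.smul_mem _ _ ?_) (Submodule.smul_mem _ _ ?_)))
    (Submodule.smul_mem _ _ ?_) <;> exact Submodule.subset_span (by simp)

lemma eq_evalDual_discSpan_of_mem_openSegment (x : 𝔻) {φ ψ : StrongDual ℂ discSpan}
    (hφ : ‖φ‖ ≤ 1) (hψ : ‖ψ‖ ≤ 1) (hseg : evalDual discSpan x ∈ openSegment ℝ φ ψ) :
    φ = evalDual discSpan x := by
  have h1 : (1 : C(𝔻, ℂ)) ∈ discSpan := Submodule.subset_span (by simp)
  obtain ⟨Φ, hΦ, hΦφ⟩ := exists_isState_extension h1 hφ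
    (apply_one_eq_one_of_evalDual_mem_openSegment h1 hφ hψ hseg)
  obtain ⟨Ψ, hΨ, hΨψ⟩ := exists_isState_extension h1 hψ
    (apply_one_eq_one_of_evalDual_mem_openSegment h1 hψ hφ (openSegment_symm ℝ φ ψ ▸ hseg))
  set w := discCoord - algebraMap ℂ C(𝔻, ℂ) x
  have hΦw : Φ (star w * w) = 0 :=
    hΦ.apply_eq_zero_of_evalDual_mem_openSegment hΨ hΦφ hΨψ hseg
      (star_sub_mul_sub_mem_discSpan x) (fun z => star_mul_self_nonneg (w z))
      (by simp [w, discCoord])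
  obtain ⟨hZ, hZstar, hZnormSq⟩ := hΦ.apply_eq_of_apply_star_sub_mul_sub_eq_zero hΦw
  refine eq_evalDual_of_apply_eq ?_
  rintro f (rfl | rfl | rfl | rfl) <;> rw [← hΦφ]
  · exact hΦ.apply_one
  · exact hZ
  · exact hZstar
  · rw [hZnormSq, normSq_eq_conj_mul_self]
    rfl

theorem choquetBoundary_discSpan : ChoquetBoundary discSpan = Set.univ := by
  refine Set.eq_univ_of_forall fun x => ⟨?_, fun φ hφ ψ hψ hseg => ?_⟩
  · exact Metric.mem_closedBall.2 <| (dist_zero_right (evalDual discSpan x)).trans_le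
      (LinearMap.mkContinuous_norm_le _ zero_le_one _)
  · replace hφ : ‖φ‖ ≤ 1 := (dist_zero_right φ).symm.trans_le (Metric.mem_closedBall.1 hφ)
    replace hψ : ‖ψ‖ ≤ 1 := (dist_zero_right ψ).symm.trans_le (Metric.mem_closedBall.1 hψ)
    exact eq_evalDual_discSpan_of_mem_openSegment x hφ hψ hseg

/-- The Choquet boundary of `span {1, z, z̄, |z|²} ⊆ C(D)` is all of the closed unit disc `D`. -/
theorem choquet_boundary_disc_span :
    ChoquetBoundary (Submodule.span ℂ
      ({1,
        ⟨fun z => (z : ℂ), continuous_subtype_val⟩,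
        ⟨fun z => (starRingEnd ℂ) (z : ℂ), Complex.continuous_conj.comp continuous_subtype_val⟩,
        ⟨fun z => ((‖(z : ℂ)‖ ^ 2 : ℝ) : ℂ),
         Complex.continuous_ofReal.comp ((continuous_norm.comp continuous_subtype_val).pow 2)⟩} :
          Set C(↥(Metric.closedBall (0 : ℂ) 1), ℂ))) = Set.univ := by
  convert choquetBoundary_discSpan using 7
  · rfl
  · rfl
  · ext z
    simp [discCoord, conj_mul']
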